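/- arXiv:2406.01418 — 2 statements merged into one kernel-verified Lean document; each statement's English description precedes it below -/
import Mathlib

section
/- Let (K,x) be a tribe-vertex pair of a finite simple graph H in which x is adjacent to every vertex of K, and for 0 ≤ i ≤ |K| let H_i be the graph obtained from H by removing the edges joining x to exactly i of the vertices of K (say to v_1,…,v_i for a fixed ordering v_1,…,v_{|K|} of K). Then for any 0 ≤ i ≤ j ≤ k ≤ |K| one has (i−j)·X_{H_k} + (j−k)·X_{H_i} + (k−i)·X_{H_j} = 0. -/
/-!
Fix a content `d`. A proper coloring of `H_{n+1}` either is a proper coloring of `H_n` or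
gives `x` the color of `vtx n`; in the second case, as `vtx n` is adjacent to every later
`vtx c`, it is exactly a proper coloring of `H_m` in which `x` and `vtx n` share a color.
In `H_m` the vertices of `K` are twins, so transposing two of them is an automorphism fixing
`x`, and the number of these colorings does not depend on `n`. Hence `n ↦ X_{H_n}` is affine
on `0 ≤ n ≤ m`, which is the three-term identity.
-/

noncomputable section
open scoped Classical

/-- The chromatic symmetric function of a simple graph `G`, as a formal power
series over `ℚ` in countably many commuting variables indexed by the colors `ℕ`.
The coefficient of the monomial `∏ i, xᵢ ^ d i` is the number of proper
colorings `κ : V → ℕ` whose class of color `i` has exactly `d i` vertices. -/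
def csf {V : Type} (G : SimpleGraph V) : MvPowerSeries ℕ ℚ :=
  fun d : ℕ →₀ ℕ =>
    (Nat.card {κ : V → ℕ // (∀ a b : V, G.Adj a b → κ a ≠ κ b) ∧
        ∀ i : ℕ, Nat.card {v : V // κ v = i} = d i} : ℚ)

/-- The elementary symmetric function `eₖ`, as a formal power series:
the sum of all squarefree monomials of degree `k`. -/
def esymm (k : ℕ) : MvPowerSeries ℕ ℚ :=
  fun d : ℕ →₀ ℕ => if (∀ i, d i ≤ 1) ∧ d.support.card = k then 1 else 0

/-- `e_I = e_{i₁} ⋯ e_{i_l}` for a composition recorded as a list. -/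
def eList (I : List ℕ) : MvPowerSeries ℕ ℚ := (I.map esymm).prod

/-- The disjoint union of two simple graphs. -/
def disjSum {α β : Type} (G : SimpleGraph α) (H : SimpleGraph β) :
    SimpleGraph (α ⊕ β) where
  Adj x y := (∃ a b, G.Adj a b ∧ x = Sum.inl a ∧ y = Sum.inl b) ∨
             (∃ a b, H.Adj a b ∧ x = Sum.inr a ∧ y = Sum.inr b)
  symm := by
    refine ⟨?_⟩
    rintro x y (⟨a, b, h, rfl, rfl⟩ | ⟨a, b, h, rfl, rfl⟩)
    · exact Or.inl ⟨b, a, h.symm, rfl, rfl⟩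
    · exact Or.inr ⟨b, a, h.symm, rfl, rfl⟩
  loopless := by
    refine ⟨?_⟩
    rintro x (⟨a, b, h, rfl, hy⟩ | ⟨a, b, h, rfl, hy⟩) <;>
      · cases hy
        exact h.ne rfl

/-- The quotient of a simple graph obtained by identifying vertices along the
equivalence relation generated by `r`; identified vertices are joined by an
edge in the quotient iff some pair of their representatives were adjacent. -/
def glue {α : Type} (G : SimpleGraph α) (r : α → α → Prop) :
    SimpleGraph (Quotient (Relation.EqvGen.setoid r)) where
  Adj x y := x ≠ y ∧ ∃ a b, G.Adj a b ∧ Quotient.mk _ a = x ∧ Quotient.mk _ b = y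
  symm := by
    refine ⟨?_⟩
    rintro x y ⟨hne, a, b, hab, rfl, rfl⟩
    exact ⟨hne.symm, b, a, hab.symm, rfl, rfl⟩
  loopless := ⟨fun x h => h.1 rfl⟩

/-- A rooted finite simple graph. -/
structure PtGraph : Type 1 where
  V : Type
  fin : Finite V
  graph : SimpleGraph V
  root : V

attribute [instance] PtGraph.fin

/-- The chromatic symmetric function of a rooted graph. -/
def PtGraph.csf (G : PtGraph) : MvPowerSeries ℕ ℚ := _root_.csf G.graph

/-- The rooted one-vertex graph `K₁`. -/
def PtGraph.K1 : PtGraph := ⟨PUnit, inferInstance, ⊥, PUnit.unit⟩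

/-- The identifications performed when conjoining two rooted graphs by a path
of length `k`: the first end of a path with `k+1` vertices is glued to the
root of `G` and the last end to the root of `H`. -/
def pcRel (k : ℕ) (G H : PtGraph) :
    (G.V ⊕ (Fin (k + 1) ⊕ H.V)) → (G.V ⊕ (Fin (k + 1) ⊕ H.V)) → Prop :=
  fun x y =>
    (x = Sum.inl G.root ∧ y = Sum.inr (Sum.inl 0)) ∨
    (x = Sum.inr (Sum.inl (Fin.last k)) ∧ y = Sum.inr (Sum.inr H.root))

/-- The path-conjoined graph `P^k(G,H)` of two rooted graphs `(G,u)`, `(H,v)`: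
take the disjoint union of `G`, a path with `k+1` vertices and `H`, and glue the
two ends of the path to `u` and to `v` respectively. (For `k = 0` the two roots
get identified.)  The resulting graph is rooted at (the image of) `v`. -/
def pathConjoin (k : ℕ) (G H : PtGraph) : PtGraph where
  V := Quotient (Relation.EqvGen.setoid (pcRel k G H))
  fin := inferInstance
  graph := glue (disjSum G.graph (disjSum (SimpleGraph.pathGraph (k + 1)) H.graph))
      (pcRel k G H)
  root := Quotient.mk _ (Sum.inr (Sum.inr H.root))

/-- The tailed graph `G^k = P^k(G, K₁)`. -/
def PtGraph.tail (G : PtGraph) (k : ℕ) : PtGraph := pathConjoin k G PtGraph.K1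

/-- The same graph with a new root. -/
def PtGraph.reroot (G : PtGraph) (w : G.V) : PtGraph := ⟨G.V, G.fin, G.graph, w⟩

/-- The spider-conjoined graph `S^τ(G₁, …, G_l)`: each rooted graph `Gᵢ` is
joined to a common center vertex by a path of length `τᵢ`.  The legs are
recorded as a list of pairs `(τᵢ, Gᵢ)`; the result is rooted at the center. -/
def spiderConjoin (legs : List (ℕ × PtGraph)) : PtGraph :=
  legs.foldr (fun p C => pathConjoin p.1 p.2 C) PtGraph.K1

/-- The 2-chain-conjoined graph `C^{gh}(G, M, H)` where the middle graph `M`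
has the two (distinct) roots `x` and `y`: a path of length `g` joins the root
of `G` to `x`, and a path of length `h` joins `y` to the root of `H`. -/
def chain2 (g h : ℕ) (G : PtGraph) {μ : Type} (finμ : Finite μ)
    (M : SimpleGraph μ) (x y : μ) (H : PtGraph) : PtGraph :=
  pathConjoin h ((pathConjoin g G ⟨μ, finμ, M, x⟩).reroot
    (Quotient.mk _ (Sum.inr (Sum.inr y)))) H

/-- The complete graph `K_m` as a rooted graph (on the vertex set
`Option (Fin (m-1))`, which has `m` elements for `m ≥ 1`), rooted at `none`. -/
def ptClique (m : ℕ) : PtGraph := ⟨Option (Fin (m - 1)), inferInstance, ⊤, none⟩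

/-- The cycle `Cₙ` on `Fin n`: `i` is adjacent to `i ± 1 (mod n)`.
For `n = 2` this is the complete graph `K₂`. -/
def cycAdj (n : ℕ) : SimpleGraph (Fin n) :=
  SimpleGraph.fromRel fun i j => ((i : ℕ) + 1) % n = (j : ℕ)

/-- The cycle `C_m` as a rooted graph (the vertex type `Fin (m - 1 + 1)` is
`Fin m` for `m ≥ 1` and is always nonempty), rooted at `0`. -/
def ptCycle (m : ℕ) : PtGraph :=
  ⟨Fin (m - 1 + 1), inferInstance, cycAdj (m - 1 + 1), 0⟩

/-- The finite set of all compositions of `n`, recorded as lists of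
positive integers summing to `n`. -/
def compositions : ℕ → Finset (List ℕ)
  | 0 => {([] : List ℕ)}
  | n + 1 =>
      (Finset.range (n + 1)).attach.biUnion fun k =>
        (compositions k.1).image fun I => (n + 1 - k.1) :: I
  decreasing_by exact Finset.mem_range.mp k.2

/-- `w_I = i₁ (i₂ - 1) (i₃ - 1) ⋯ (i_l - 1)`, with `w` of the empty
composition equal to `1`. -/
def wcomp : List ℕ → ℚ
  | [] => 1
  | a :: t => (a : ℚ) * (t.map fun i => (i : ℚ) - 1).prod

/-- `σ_I(a) = min { i₁ + ⋯ + i_k : 0 ≤ k ≤ ℓ(I), i₁ + ⋯ + i_k ≥ a }`. -/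
def sigmaComp (I : List ℕ) (a : ℕ) : ℕ :=
  ((((List.range (I.length + 1)).map fun k => (I.take k).sum).filter
    fun s => a ≤ s).foldr min I.sum)

/-- The `a`-surplus `Θ_I(a) = σ_I(a) - a` of a composition. -/
def thetaComp (I : List ℕ) (a : ℕ) : ℕ := sigmaComp I a - a

section Colorings

variable {V : Type}

def IsProperColoring (G : SimpleGraph V) (κ : V → ℕ) : Prop :=
  ∀ a b, G.Adj a b → κ a ≠ κ b

def HasContent (d : ℕ →₀ ℕ) (κ : V → ℕ) : Prop :=
  ∀ i, Nat.card {v // κ v = i} = d i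

def coloringSeries (p : (V → ℕ) → Prop) : MvPowerSeries ℕ ℚ :=
  fun d => {κ | p κ ∧ HasContent d κ}.ncard

theorem csf_eq_coloringSeries (G : SimpleGraph V) :
    csf G = coloringSeries (IsProperColoring G) := by
  funext d
  exact congrArg Nat.cast (Nat.card_coe_set_eq {κ | IsProperColoring G κ ∧ HasContent d κ})

theorem IsProperColoring.of_le {G G' : SimpleGraph V} {κ : V → ℕ} (hle : G ≤ G')
    (hκ : IsProperColoring G' κ) : IsProperColoring G κ :=
  fun a b hab => hκ a b (hle hab)

theorem isProperColoring_comp_iso {G : SimpleGraph V} (σ : G ≃g G) (κ : V → ℕ) :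
    IsProperColoring G (κ ∘ σ) ↔ IsProperColoring G κ := by
  refine ⟨fun hκ a b hab => ?_, fun hκ a b hab => hκ _ _ (σ.map_rel_iff.2 hab)⟩
  simpa using hκ (σ.symm a) (σ.symm b) (σ.symm.map_rel_iff.2 hab)

theorem hasContent_comp_equiv (σ : V ≃ V) (d : ℕ →₀ ℕ) (κ : V → ℕ) :
    HasContent d (κ ∘ σ) ↔ HasContent d κ := by
  have hcard : ∀ i, Nat.card {v // (κ ∘ σ) v = i} = Nat.card {v // κ v = i} :=
    fun i => Nat.card_congr (σ.subtypeEquiv fun _ => Iff.rfl)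
  simp only [HasContent, hcard]

/-- Every color of a coloring with content `d` lies in the finite set `d.support`. -/
theorem finite_setOf_hasContent [Finite V] (d : ℕ →₀ ℕ) :
    {κ : V → ℕ | HasContent d κ}.Finite := by
  refine (Set.Finite.pi (t := fun _ : V => (d.support : Set ℕ))
    fun _ => d.support.finite_toSet).subset fun κ hκ v _ => ?_
  have : Nonempty {u // κ u = κ v} := ⟨⟨v, rfl⟩⟩
  simpa [← hκ (κ v)] using (Nat.card_pos (α := {u // κ u = κ v})).ne'

theorem coloringSeries_or [Finite V] {p q : (V → ℕ) → Prop} (hpq : ∀ κ, p κ → ¬ q κ) :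
    coloringSeries (fun κ => p κ ∨ q κ) = coloringSeries p + coloringSeries q := by
  funext d
  have hfin := finite_setOf_hasContent (V := V) d
  have hunion : {κ | (p κ ∨ q κ) ∧ HasContent d κ} =
      {κ | p κ ∧ HasContent d κ} ∪ {κ | q κ ∧ HasContent d κ} := by
    simp only [or_and_right, Set.ofPred_or]
  have hdisj : Disjoint {κ | p κ ∧ HasContent d κ} {κ | q κ ∧ HasContent d κ} :=
    Set.disjoint_left.2 fun κ hp hq => hpq κ hp.1 hq.1
  change (({κ | (p κ ∨ q κ) ∧ HasContent d κ}.ncard : ℕ) : ℚ) = _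
  rw [hunion, Set.ncard_union_eq hdisj (hfin.subset fun _ h => h.2) (hfin.subset fun _ h => h.2)]
  push_cast
  rfl

theorem coloringSeries_comp_equiv (σ : V ≃ V) (p : (V → ℕ) → Prop) :
    coloringSeries (fun κ => p (κ ∘ σ)) = coloringSeries p := by
  funext d
  refine congrArg _ (Set.ncard_congr (fun κ _ => κ ∘ σ) ?_ ?_ ?_)
  · exact fun κ hκ => ⟨hκ.1, (hasContent_comp_equiv σ d κ).2 hκ.2⟩
  · exact fun κ κ' _ _ h => σ.surjective.injective_comp_right h
  · refine fun κ hκ => ⟨κ ∘ σ.symm, ⟨?_, ?_⟩, ?_⟩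
    · simpa [Function.comp_assoc] using hκ.1
    · exact (hasContent_comp_equiv σ.symm d κ).2 hκ.2
    · simp [Function.comp_assoc]

theorem coloringSeries_identify_iso {G : SimpleGraph V} (σ : G ≃g G) (u w : V) :
    coloringSeries (fun κ => IsProperColoring G κ ∧ κ (σ u) = κ (σ w)) =
      coloringSeries (fun κ => IsProperColoring G κ ∧ κ u = κ w) := by
  rw [← coloringSeries_comp_equiv σ.toEquiv (fun κ => IsProperColoring G κ ∧ κ u = κ w)]
  congr 1
  ext κ
  exact and_congr_left' (isProperColoring_comp_iso σ κ).symm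

end Colorings

def SimpleGraph.Iso.swapOfTwins {V : Type} [DecidableEq V] (G : SimpleGraph V) {u w : V}
    (h : ∀ z, z ≠ u → z ≠ w → (G.Adj u z ↔ G.Adj w z)) : G ≃g G where
  toEquiv := Equiv.swap u w
  map_rel_iff' := by
    have key : ∀ a b, G.Adj a b → G.Adj (Equiv.swap u w a) (Equiv.swap u w b) := by
      intro a b hab
      rw [Equiv.swap_apply_def, Equiv.swap_apply_def]
      split_ifs <;> subst_vars <;> grind [SimpleGraph.adj_comm, SimpleGraph.irrefl]
    intro a b
    refine ⟨fun hab => ?_, key a b⟩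
    simpa using key _ _ hab

theorem three_term_of_constant_increment {M : Type*} [AddCommGroup M] [Module ℚ M]
    (f : ℕ → M) (m : ℕ) (hf : ∀ n < m, f (n + 1) - f n = f 1 - f 0)
    {i j k : ℕ} (hij : i ≤ j) (hjk : j ≤ k) (hkm : k ≤ m) :
    ((i : ℚ) - j) • f k + ((j : ℚ) - k) • f i + ((k : ℚ) - i) • f j = 0 := by
  have hlin : ∀ n ≤ m, f n = f 0 + (n : ℚ) • (f 1 - f 0) := by
    intro n hn
    induction n with
    | zero => simp
    | succ n ih =>
      rw [← sub_add_cancel (f (n + 1)) (f n), hf n hn, ih (by omega)]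
      push_cast
      module
  rw [hlin i (by omega), hlin j (by omega), hlin k hkm]
  module

section TribeVertex

variable {V : Type} (H : SimpleGraph V) {m : ℕ} (vtx : Fin m → V) (x : V)

def deleteSpokes (n : ℕ) : SimpleGraph V :=
  H.deleteEdges {e | ∃ a : Fin m, (a : ℕ) < n ∧ e = s(x, vtx a)}

variable {H vtx x}

theorem deleteSpokes_adj {n : ℕ} {u w : V} : (deleteSpokes H vtx x n).Adj u w ↔
    H.Adj u w ∧ ¬ ∃ a : Fin m, (a : ℕ) < n ∧ s(u, w) = s(x, vtx a) :=
  SimpleGraph.deleteEdges_adj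

theorem deleteSpokes_adj_of_ne (hx : ∀ a, vtx a ≠ x) (n : ℕ) {u w : V} (hu : u ≠ x)
    (hw : w ≠ x) : (deleteSpokes H vtx x n).Adj u w ↔ H.Adj u w := by
  refine deleteSpokes_adj.trans ⟨fun h => h.1, fun h => ⟨h, ?_⟩⟩
  rintro ⟨a, -, he⟩
  rcases Sym2.eq_iff.1 he with ⟨rfl, -⟩ | ⟨-, rfl⟩ <;> simp_all

theorem isProperColoring_deleteSpokes_iff (hinj : Function.Injective vtx)
    (hx : ∀ a, vtx a ≠ x) (hadj : ∀ a, H.Adj x (vtx a)) (n : ℕ) (κ : V → ℕ) :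
    IsProperColoring (deleteSpokes H vtx x n) κ ↔
      IsProperColoring (deleteSpokes H vtx x m) κ ∧
        ∀ a : Fin m, n ≤ a → κ x ≠ κ (vtx a) := by
  constructor
  · refine fun hκ => ⟨hκ.of_le (SimpleGraph.deleteEdges_anti ?_),
      fun a ha => hκ _ _ (deleteSpokes_adj.2 ⟨hadj a, ?_⟩)⟩
    · rintro e ⟨a, ha, rfl⟩
      exact ⟨a, by omega, rfl⟩
    · rintro ⟨c, hc, he⟩
      rcases Sym2.eq_iff.1 he with ⟨-, hac⟩ | ⟨-, hax⟩
      · exact absurd (hinj hac) (by omega)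
      · exact hx a hax
  · rintro ⟨hκ, hspokes⟩ u w huw
    rw [deleteSpokes_adj] at huw
    by_cases hspoke : ∃ c : Fin m, (c : ℕ) < m ∧ s(u, w) = s(x, vtx c)
    · obtain ⟨c, -, he⟩ := hspoke
      have hc : n ≤ c := not_lt.1 fun hc => huw.2 ⟨c, hc, he⟩
      rcases Sym2.eq_iff.1 he with ⟨rfl, rfl⟩ | ⟨rfl, rfl⟩
      exacts [hspokes c hc, (hspokes c hc).symm]
    · exact hκ u w (deleteSpokes_adj.2 ⟨huw.1, hspoke⟩)

theorem isProperColoring_deleteSpokes_succ_iff (hinj : Function.Injective vtx)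
    (hx : ∀ a, vtx a ≠ x) (hclique : ∀ a b : Fin m, a ≠ b → H.Adj (vtx a) (vtx b))
    (hadj : ∀ a, H.Adj x (vtx a)) {n : ℕ} (hn : n < m) (κ : V → ℕ) :
    IsProperColoring (deleteSpokes H vtx x (n + 1)) κ ↔
      IsProperColoring (deleteSpokes H vtx x n) κ ∨
        (IsProperColoring (deleteSpokes H vtx x m) κ ∧ κ x = κ (vtx ⟨n, hn⟩)) := by
  rw [isProperColoring_deleteSpokes_iff hinj hx hadj (n + 1) κ,
    isProperColoring_deleteSpokes_iff hinj hx hadj n κ]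
  constructor
  · rintro ⟨hκ, hspokes⟩
    by_cases hxn : κ x = κ (vtx ⟨n, hn⟩)
    · exact Or.inr ⟨hκ, hxn⟩
    · refine Or.inl ⟨hκ, fun a ha => ?_⟩
      rcases (Nat.lt_or_eq_of_le ha).symm with han | han
      · exact (Fin.ext han : ⟨n, hn⟩ = a) ▸ hxn
      · exact hspokes a han
  · rintro (⟨hκ, hspokes⟩ | ⟨hκ, hxn⟩)
    · exact ⟨hκ, fun a ha => hspokes a (by omega)⟩
    · refine ⟨hκ, fun a ha => hxn ▸ hκ _ _ ?_⟩
      refine (deleteSpokes_adj_of_ne hx m (hx _) (hx _)).2 (hclique _ _ fun h => ?_)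
      simp [Fin.ext_iff] at h
      omega

theorem deleteSpokes_adj_iff_of_twins (hx : ∀ a, vtx a ≠ x)
    (hnbhd : ∀ (a b : Fin m) (z : V), z ≠ x →
      ((z = vtx a ∨ H.Adj (vtx a) z) ↔ (z = vtx b ∨ H.Adj (vtx b) z)))
    (a b : Fin m) (z : V) (hza : z ≠ vtx a) (hzb : z ≠ vtx b) :
    (deleteSpokes H vtx x m).Adj (vtx a) z ↔ (deleteSpokes H vtx x m).Adj (vtx b) z := by
  rcases eq_or_ne z x with rfl | hzx
  · have hcut : ∀ c : Fin m, ¬ (deleteSpokes H vtx z m).Adj (vtx c) z :=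
      fun c h => (deleteSpokes_adj.1 h).2 ⟨c, c.isLt, Sym2.eq_swap⟩
    simp only [hcut]
  · rw [deleteSpokes_adj_of_ne hx m (hx a) hzx, deleteSpokes_adj_of_ne hx m (hx b) hzx]
    simpa [hza, hzb] using hnbhd a b z hzx

theorem coloringSeries_identify_spoke_eq (hx : ∀ a, vtx a ≠ x)
    (hnbhd : ∀ (a b : Fin m) (z : V), z ≠ x →
      ((z = vtx a ∨ H.Adj (vtx a) z) ↔ (z = vtx b ∨ H.Adj (vtx b) z)))
    (a b : Fin m) :
    coloringSeries (fun κ => IsProperColoring (deleteSpokes H vtx x m) κ ∧ κ x = κ (vtx a)) =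
      coloringSeries (fun κ => IsProperColoring (deleteSpokes H vtx x m) κ ∧
        κ x = κ (vtx b)) := by
  let σ := SimpleGraph.Iso.swapOfTwins _ (deleteSpokes_adj_iff_of_twins hx hnbhd b a)
  have hσx : σ x = x := Equiv.swap_apply_of_ne_of_ne (hx b).symm (hx a).symm
  have hσa : σ (vtx a) = vtx b := Equiv.swap_apply_right _ _
  rw [← coloringSeries_identify_iso σ, hσx, hσa]

theorem csf_deleteSpokes_succ [Finite V] (hinj : Function.Injective vtx) (hx : ∀ a, vtx a ≠ x)
    (hclique : ∀ a b : Fin m, a ≠ b → H.Adj (vtx a) (vtx b)) (hadj : ∀ a, H.Adj x (vtx a))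
    {n : ℕ} (hn : n < m) :
    csf (deleteSpokes H vtx x (n + 1)) = csf (deleteSpokes H vtx x n) +
      coloringSeries (fun κ => IsProperColoring (deleteSpokes H vtx x m) κ ∧
        κ x = κ (vtx ⟨n, hn⟩)) := by
  have hsplit : IsProperColoring (deleteSpokes H vtx x (n + 1)) = fun κ =>
      IsProperColoring (deleteSpokes H vtx x n) κ ∨
        (IsProperColoring (deleteSpokes H vtx x m) κ ∧ κ x = κ (vtx ⟨n, hn⟩)) :=
    funext fun κ => propext (isProperColoring_deleteSpokes_succ_iff hinj hx hclique hadj hn κ)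
  rw [csf_eq_coloringSeries, csf_eq_coloringSeries, hsplit]
  exact coloringSeries_or fun κ hκ hxn =>
    (isProperColoring_deleteSpokes_iff hinj hx hadj n κ).1 hκ |>.2 ⟨n, hn⟩ le_rfl hxn.2

end TribeVertex

/-- the arithmetic-progression property for removing edges from a
tribe-vertex pair `(K, x)` of `H` in which `x` is adjacent to every vertex of
the clique `K` (enumerated as `vtx 0, …, vtx (m-1)`): `Hdel i` removes from `H`
the edges joining `x` to the first `i` vertices of `K`, and for all
`0 ≤ i ≤ j ≤ k ≤ |K|` we have
`(i-j)·X_{H_k} + (j-k)·X_{H_i} + (k-i)·X_{H_j} = 0`. -/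
theorem statement1 {V : Type} [Fintype V] (H : SimpleGraph V)
    (m : ℕ) (vtx : Fin m → V) (hinj : Function.Injective vtx)
    (x : V) (hx : ∀ a, vtx a ≠ x)
    (hclique : ∀ a b : Fin m, a ≠ b → H.Adj (vtx a) (vtx b))
    (hnbhd : ∀ (a b : Fin m) (z : V), z ≠ x →
      ((z = vtx a ∨ H.Adj (vtx a) z) ↔ (z = vtx b ∨ H.Adj (vtx b) z)))
    (hadj : ∀ a : Fin m, H.Adj x (vtx a))
    (Hdel : ℕ → SimpleGraph V)
    (hHdel : ∀ i, Hdel i =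
      H.deleteEdges {e : Sym2 V | ∃ a : Fin m, (a : ℕ) < i ∧ e = s(x, vtx a)})
    (i j k : ℕ) (hij : i ≤ j) (hjk : j ≤ k) (hkm : k ≤ m) :
    ((i : ℚ) - (j : ℚ)) • csf (Hdel k) + ((j : ℚ) - (k : ℚ)) • csf (Hdel i) +
      ((k : ℚ) - (i : ℚ)) • csf (Hdel j) = 0 := by
  have hHdel_eq : ∀ n, Hdel n = deleteSpokes H vtx x n := hHdel
  simp only [hHdel_eq]
  refine three_term_of_constant_increment (fun n => csf (deleteSpokes H vtx x n)) m
    (fun n hn => ?_) hij hjk hkm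
  have h0 : 0 < m := by omega
  rw [csf_deleteSpokes_succ hinj hx hclique hadj hn,
    csf_deleteSpokes_succ hinj hx hclique hadj h0,
    coloringSeries_identify_spoke_eq hx hnbhd ⟨n, hn⟩ ⟨0, h0⟩]
  abel
end
end

section
/- Let n ≥ 1 and 0 ≤ a ≤ n be integers. Then Σ_{l=0}^{a} (1−l) · e_l · X_{P_{n−l}} equals X_{K_{a+1}^{n−1−a}} / a! if a ≤ n−1, and equals e_n if a = n. -/
noncomputable section
open scoped Classical

/-!
Coefficientwise, `e_l X_{P_m}` counts pairs `(S, κ)` of an `l`-set of colours `S` and a proper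
colouring `κ` of `P_m`, while `X_{K_{a+1}^k} / a!` counts the pairs with `|S| = a` and `κ` a
colouring of `P_{k+1}` whose first colour lies outside `S` (the colours of the other `a` clique
vertices); call this series `R(a, k)`. Moving the first path vertex of such a pair into `S` gives an
`(a+1)`-set `S'` with a marked element `i` and a colouring of `P_{k+1}` starting with a colour
`c ≠ i`. There are `a` or `a + 1` choices of `i` according as `c ∈ S'` or not, so
`R(a, k+1) = a e_{a+1} X_{P_{k+1}} + R(a+1, k)`, and the sum telescopes to `R(a, n-1-a)`.
For `a = n` the last summand is `(1 - n) e_n` and `R(n-1, 0) = n e_n`.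
-/

open Finset

lemma Nat.card_eq_sum_card_fiber {α β : Type*} {P : α → Prop} [Finite {x // P x}] (c : α → β)
    (s : Finset β) (hc : ∀ x, P x → c x ∈ s) :
    Nat.card {x // P x} = ∑ b ∈ s, Nat.card {x // P x ∧ c x = b} := by
  let c' : {x // P x} → s := fun x => ⟨c x, hc x x.2⟩
  rw [← Nat.card_congr (Equiv.sigmaFiberEquiv c'), Nat.card_sigma, ← sum_coe_sort s]
  refine Fintype.sum_congr _ _ fun b => Nat.card_congr
    { toFun := fun x => ⟨x.1.1, x.1.2, congrArg Subtype.val x.2⟩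
      invFun := fun x => ⟨⟨x.1, x.2.1⟩, Subtype.ext x.2.2⟩ }

section Indicator

def indicatorFinsupp (S : Finset ℕ) : ℕ →₀ ℕ := ∑ i ∈ S, Finsupp.single i 1

lemma indicatorFinsupp_apply (S : Finset ℕ) (j : ℕ) :
    indicatorFinsupp S j = if j ∈ S then 1 else 0 := by
  simp [indicatorFinsupp, Finsupp.finsetSum_apply, Finsupp.single_apply]

@[simp]
lemma support_indicatorFinsupp (S : Finset ℕ) : (indicatorFinsupp S).support = S := by
  ext j
  simp [indicatorFinsupp_apply]

lemma indicatorFinsupp_insert {S : Finset ℕ} {i : ℕ} (h : i ∉ S) :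
    indicatorFinsupp (insert i S) = indicatorFinsupp S + Finsupp.single i 1 := by
  rw [indicatorFinsupp, sum_insert h, add_comm, indicatorFinsupp]

lemma indicatorFinsupp_le {S : Finset ℕ} {d : ℕ →₀ ℕ} (h : S ⊆ d.support) :
    indicatorFinsupp S ≤ d := fun j => by
  rw [indicatorFinsupp_apply]
  split_ifs with hj
  · exact Nat.one_le_iff_ne_zero.2 (Finsupp.mem_support_iff.1 (h hj))
  · exact Nat.zero_le _

lemma eq_indicatorFinsupp_support {d : ℕ →₀ ℕ} (h : ∀ i, d i ≤ 1) :
    d = indicatorFinsupp d.support := by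
  ext j
  have := h j
  rw [indicatorFinsupp_apply]
  split_ifs with hj <;> rw [Finsupp.mem_support_iff] at hj <;> omega

lemma sub_indicatorFinsupp_eq_sub_insert_add {d : ℕ →₀ ℕ} {S : Finset ℕ} {i : ℕ}
    (hS : S ⊆ d.support) (hi : i ∈ d.support \ S) :
    d - indicatorFinsupp S = d - indicatorFinsupp (insert i S) + Finsupp.single i 1 := by
  rw [mem_sdiff] at hi
  have hle := indicatorFinsupp_le (insert_subset hi.1 hS)
  rw [indicatorFinsupp_insert hi.2] at hle ⊢
  rw [tsub_add_eq_tsub_tsub, tsub_add_cancel_of_le (le_tsub_of_add_le_left hle)]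

end Indicator

section Profile

variable {V : Type*} [Fintype V]

/-- The exponent vector of the monomial `∏ v, x_{κ v}`. -/
def profile (κ : V → ℕ) : ℕ →₀ ℕ := ∑ v, Finsupp.single (κ v) 1

lemma profile_apply (κ : V → ℕ) (i : ℕ) : profile κ i = Nat.card {v // κ v = i} := by
  simp [profile, Finsupp.finsetSum_apply, Finsupp.single_apply, Nat.card_eq_fintype_card,
    Fintype.card_subtype]

lemma mem_support_profile (κ : V → ℕ) (v : V) : κ v ∈ (profile κ).support := by
  rw [Finsupp.mem_support_iff, profile_apply]
  have : Nonempty {w // κ w = κ v} := ⟨⟨v, rfl⟩⟩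
  exact Nat.card_pos.ne'

lemma finite_of_profile_eq {P : (V → ℕ) → Prop} {d : ℕ →₀ ℕ} (h : ∀ κ, P κ → profile κ = d) :
    Finite {κ // P κ} :=
  Finite.of_injective (fun (κ : {κ // P κ}) (v : V) =>
      (⟨κ.1 v, h κ.1 κ.2 ▸ mem_support_profile κ.1 v⟩ : d.support))
    fun _ _ hκ => Subtype.ext <| funext fun v => congrArg Subtype.val (congrFun hκ v)

lemma profile_sum {W : Type*} [Fintype W] (κ : V ⊕ W → ℕ) :
    profile κ = profile (κ ∘ Sum.inl) + profile (κ ∘ Sum.inr) := by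
  simp [profile, Fintype.sum_sum_type]

lemma profile_cons {m : ℕ} (i : ℕ) (κ : Fin m → ℕ) :
    profile (Fin.cons i κ : Fin (m + 1) → ℕ) = Finsupp.single i 1 + profile κ := by
  simp [profile, Fin.sum_univ_succ]

lemma profile_of_injective {m : ℕ} {f : Fin m → ℕ} (hf : Function.Injective f) :
    profile f = indicatorFinsupp (univ.image f) := by
  rw [indicatorFinsupp, sum_image fun x _ y _ h => hf h]
  rfl

lemma card_profile_eq_of_isEmpty [IsEmpty V] {P : (V → ℕ) → Prop} (hP : ∀ κ, P κ)
    (d : ℕ →₀ ℕ) : Nat.card {κ : V → ℕ // P κ ∧ profile κ = d} = if d = 0 then 1 else 0 := by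
  have hprofile (κ : V → ℕ) : profile κ = 0 := by simp [profile]
  split_ifs with hd
  · rw [Nat.card_eq_one_iff_unique]
    exact ⟨⟨fun κ κ' => Subtype.ext (funext isEmptyElim)⟩,
      ⟨⟨isEmptyElim, hP _, hd ▸ hprofile _⟩⟩⟩
  · rw [Nat.card_eq_zero]
    exact Or.inl ⟨fun κ => hd (κ.2.2 ▸ hprofile κ.1)⟩

end Profile

lemma csf_apply {V : Type} [Fintype V] (G : SimpleGraph V) (d : ℕ →₀ ℕ) :
    csf G d = Nat.card {κ : V → ℕ // (∀ a b, G.Adj a b → κ a ≠ κ b) ∧ profile κ = d} := by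
  simp only [csf, Finsupp.ext_iff, profile_apply]

lemma csf_congr {V W : Type} {G : SimpleGraph V} {H : SimpleGraph W} (e : G ≃g H) :
    csf G = csf H := by
  funext d
  refine congrArg Nat.cast (Nat.card_congr
    (Equiv.subtypeEquiv (e.toEquiv.arrowCongr (Equiv.refl ℕ)) fun κ => ?_))
  have he : ∀ v, e.toEquiv.symm (e.toEquiv v) = v := e.toEquiv.symm_apply_apply
  simp only [Equiv.arrowCongr_apply, Function.comp_apply, Equiv.refl_apply]
  refine and_congr ⟨fun h x y hxy => ?_, fun h a b hab => ?_⟩ (forall_congr' fun i => ?_)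
  · exact h _ _ (e.symm.map_adj_iff.2 hxy)
  · simpa only [he] using h (e.toEquiv a) (e.toEquiv b) (e.map_adj_iff.2 hab)
  · exact Eq.congr_left (Nat.card_congr (e.toEquiv.subtypeEquiv fun v => by rw [he]))

lemma esymm_zero : esymm 0 = 1 := by
  ext d
  rw [MvPowerSeries.coeff_apply, MvPowerSeries.coeff_one]
  by_cases hd : d = 0 <;> simp [esymm, hd]

lemma esymm_apply_indicatorFinsupp (S : Finset ℕ) : esymm #S (indicatorFinsupp S) = 1 := by
  rw [esymm, if_pos]
  refine ⟨fun i => ?_, by simp⟩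
  rw [indicatorFinsupp_apply]
  split_ifs <;> omega

lemma esymm_mul_apply (l : ℕ) (F : MvPowerSeries ℕ ℚ) (d : ℕ →₀ ℕ) :
    (esymm l * F) d = ∑ S ∈ d.support.powersetCard l, F (d - indicatorFinsupp S) := by
  change MvPowerSeries.coeff d (esymm l * F) = _
  rw [MvPowerSeries.coeff_mul]
  symm
  refine sum_of_injOn (fun S => (indicatorFinsupp S, d - indicatorFinsupp S))
    (fun S _ T _ h => by simpa using congrArg (fun p => p.1.support) h) (fun S hS => ?_)
    (fun p hp hpS => ?_) (fun S hS => ?_)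
  · rw [mem_coe, mem_powersetCard] at hS
    simp [add_tsub_cancel_of_le (indicatorFinsupp_le hS.1)]
  · rw [HasAntidiagonal.mem_antidiagonal] at hp
    simp only [MvPowerSeries.coeff_apply, esymm]
    split_ifs with h
    · refine absurd ⟨p.1.support, ?_, ?_⟩ hpS
      · rw [mem_coe, mem_powersetCard, ← hp]
        exact ⟨Finsupp.support_mono le_self_add, h.2⟩
      · simp only [← eq_indicatorFinsupp_support h.1, ← hp, add_tsub_cancel_left]
    · rw [zero_mul]
  · rw [mem_powersetCard] at hS
    simp only [MvPowerSeries.coeff_apply]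
    rw [← hS.2, esymm_apply_indicatorFinsupp, one_mul]

section Path

lemma pathGraph_proper_iff {m : ℕ} (κ : Fin (m + 1) → ℕ) :
    (∀ a b, (SimpleGraph.pathGraph (m + 1)).Adj a b → κ a ≠ κ b) ↔
      ∀ v : Fin m, κ v.castSucc ≠ κ v.succ := by
  refine ⟨fun h v => h _ _ (SimpleGraph.pathGraph_adj.2 (Or.inl (by simp))), fun h => ?_⟩
  have key : ∀ a b : Fin (m + 1), (a : ℕ) + 1 = b → κ a ≠ κ b := fun a b hab => by
    convert h ⟨a, by omega⟩ using 2 <;> ext <;> simp [hab]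
  intro a b hab
  rcases SimpleGraph.pathGraph_adj.1 hab with hab | hab
  · exact key a b hab
  · exact (key b a hab).symm

lemma csf_pathGraph_zero : csf (SimpleGraph.pathGraph 0) = 1 := by
  ext d
  rw [MvPowerSeries.coeff_apply, csf_apply, card_profile_eq_of_isEmpty fun _ v => v.elim0,
    MvPowerSeries.coeff_one]
  push_cast
  rfl

def pathCount (m : ℕ) (d : ℕ →₀ ℕ) (i : ℕ) : ℕ :=
  Nat.card {κ : Fin (m + 1) → ℕ //
    κ 0 = i ∧ (∀ v : Fin m, κ v.castSucc ≠ κ v.succ) ∧ profile κ = d}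

lemma csf_pathGraph_succ (m : ℕ) {d : ℕ →₀ ℕ} {s : Finset ℕ} (hs : d.support ⊆ s) :
    csf (SimpleGraph.pathGraph (m + 1)) d = ∑ i ∈ s, (pathCount m d i : ℚ) := by
  have := finite_of_profile_eq (V := Fin (m + 1)) (P := fun κ =>
    (∀ a b, (SimpleGraph.pathGraph (m + 1)).Adj a b → κ a ≠ κ b) ∧ profile κ = d) fun _ h => h.2
  rw [csf_apply, Nat.card_eq_sum_card_fiber (fun κ => κ 0) s
    fun κ hκ => hs (hκ.2 ▸ mem_support_profile κ 0), Nat.cast_sum]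
  refine sum_congr rfl fun i _ => congrArg Nat.cast (Nat.card_congr
    (Equiv.subtypeEquivRight fun κ => ?_))
  rw [pathGraph_proper_iff]
  tauto

lemma Nat.card_subtype_fin_cons {m : ℕ} (i : ℕ) (P : (Fin (m + 1) → ℕ) → Prop) :
    Nat.card {κ : Fin (m + 1) → ℕ // κ 0 = i ∧ P κ} =
      Nat.card {τ : Fin m → ℕ // P (Fin.cons i τ)} :=
  Nat.card_congr
    { toFun := fun ⟨κ, h0, hP⟩ => ⟨Fin.tail κ, by subst h0; rwa [Fin.cons_self_tail]⟩
      invFun := fun τ => ⟨Fin.cons i τ.1, Fin.cons_zero _ _, τ.2⟩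
      left_inv := fun ⟨κ, h0, _⟩ => Subtype.ext (by subst h0; exact Fin.cons_self_tail κ)
      right_inv := fun _ => rfl }

lemma pathCount_add_single (m : ℕ) (d : ℕ →₀ ℕ) (i : ℕ) :
    pathCount m (d + Finsupp.single i 1) i =
      Nat.card {τ : Fin m → ℕ // (∀ v : Fin m,
        (Fin.cons i τ : Fin (m + 1) → ℕ) v.castSucc ≠ (Fin.cons i τ : Fin (m + 1) → ℕ) v.succ) ∧
          profile τ = d} := by
  rw [pathCount, Nat.card_subtype_fin_cons]
  simp only [profile_cons, add_comm (Finsupp.single i 1), add_left_inj]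

lemma pathCount_zero_add_single (d : ℕ →₀ ℕ) (i : ℕ) :
    pathCount 0 (d + Finsupp.single i 1) i = if d = 0 then 1 else 0 := by
  rw [pathCount_add_single, card_profile_eq_of_isEmpty fun _ v => v.elim0]

lemma pathCount_succ_add_single (m : ℕ) {d : ℕ →₀ ℕ} {s : Finset ℕ} (hs : d.support ⊆ s)
    (i : ℕ) : pathCount (m + 1) (d + Finsupp.single i 1) i = ∑ j ∈ s.erase i, pathCount m d j := by
  rw [pathCount_add_single]
  have := finite_of_profile_eq (V := Fin (m + 1)) (P := fun τ =>
    (∀ v : Fin (m + 1), (Fin.cons i τ : Fin (m + 2) → ℕ) v.castSucc ≠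
      (Fin.cons i τ : Fin (m + 2) → ℕ) v.succ) ∧ profile τ = d) fun _ h => h.2
  rw [Nat.card_eq_sum_card_fiber (fun τ => τ 0) (s.erase i) fun τ hτ => ?_]
  · refine sum_congr rfl fun j hj => Nat.card_congr (Equiv.subtypeEquivRight fun τ => ?_)
    rw [Fin.forall_fin_succ]
    simp only [Fin.castSucc_zero, Fin.cons_zero, Fin.succ_zero_eq_one, Fin.cons_one,
      ← Fin.succ_castSucc, Fin.cons_succ]
    refine ⟨fun ⟨⟨⟨_, hp⟩, hd⟩, h0⟩ => ⟨h0, hp, hd⟩, fun ⟨h0, hp, hd⟩ => ⟨⟨⟨?_, hp⟩, hd⟩, h0⟩⟩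
    rw [h0]
    exact (mem_erase.1 hj).1.symm
  · refine mem_erase.2 ⟨fun h => hτ.1 0 ?_, hs (hτ.2 ▸ mem_support_profile τ 0)⟩
    simp [h]

end Path

section Glue

variable {α β : Type}

def imageGraph (G : SimpleGraph α) (f : α → β) : SimpleGraph β :=
  SimpleGraph.fromRel fun x y => ∃ p q, G.Adj p q ∧ f p = x ∧ f q = y

lemma imageGraph_proper_iff (G : SimpleGraph α) (f : α → β) (κ : β → ℕ) :
    (∀ x y, (imageGraph G f).Adj x y → κ x ≠ κ y) ↔
      ∀ p q, G.Adj p q → f p ≠ f q → κ (f p) ≠ κ (f q) := by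
  refine ⟨fun h p q hpq hne => h _ _ ⟨hne, Or.inl ⟨p, q, hpq, rfl, rfl⟩⟩, ?_⟩
  rintro h x y ⟨hne, ⟨p, q, hpq, rfl, rfl⟩ | ⟨p, q, hpq, rfl, rfl⟩⟩
  · exact h p q hpq hne
  · exact (h p q hpq hne.symm).symm

/-- `hr` and `hg` say that the fibres of `f` are exactly the classes of `EqvGen r`. -/
def glueIsoImageGraph (G : SimpleGraph α) (r : α → α → Prop) (f : α → β) (g : β → α)
    (hfg : Function.RightInverse g f) (hr : ∀ x y, r x y → f x = f y)
    (hg : ∀ x, Relation.EqvGen r x (g (f x))) : glue G r ≃g imageGraph G f :=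
  have hker : ∀ x y, Relation.EqvGen r x y ↔ f x = f y := fun x y =>
    ⟨fun h => Setoid.eqvGen_le (s := Setoid.ker f) hr h,
      fun h => (hg x).trans _ _ _ (h ▸ (hg y).symm)⟩
  { toEquiv := (Quotient.congrRight hker).trans (Setoid.quotientKerEquivOfRightInverse f g hfg)
    map_rel_iff' := by
      intro X Y
      induction X using Quotient.ind with | _ x => ?_
      induction Y using Quotient.ind with | _ y => ?_
      have hmk : ∀ p q, Quotient.mk (Relation.EqvGen.setoid r) p = Quotient.mk _ q ↔ f p = f q :=
        fun p q => Quotient.eq.trans (hker p q)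
      change (imageGraph G f).Adj (f x) (f y) ↔ _ ∧ ∃ p q, G.Adj p q ∧ _ ∧ _
      simp only [imageGraph, SimpleGraph.fromRel_adj, hmk]
      refine and_congr (not_congr (hmk x y).symm) (or_iff_left_of_imp ?_)
      rintro ⟨p, q, hpq, hp, hq⟩
      exact ⟨q, p, hpq.symm, hq, hp⟩ }

end Glue

section Lollipop

variable (a k : ℕ)

/-- The quotient map of `K_{a+1} ⊔ P_{k+1} ⊔ K₁` onto the vertices `Fin a ⊕ Fin (k + 1)` of the
lollipop: the root `none` of the clique becomes the first path vertex. -/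
def lollipopMap : Option (Fin a) ⊕ (Fin (k + 1) ⊕ PUnit) → Fin a ⊕ Fin (k + 1)
  | .inl (some t) => .inl t
  | .inl none => .inr 0
  | .inr (.inl p) => .inr p
  | .inr (.inr _) => .inr (Fin.last k)

abbrev lollipopDisjSum : SimpleGraph (Option (Fin a) ⊕ (Fin (k + 1) ⊕ PUnit)) :=
  disjSum (ptClique (a + 1)).graph (disjSum (SimpleGraph.pathGraph (k + 1)) PtGraph.K1.graph)

def IsLollipopColoring (κ : Fin a ⊕ Fin (k + 1) → ℕ) : Prop :=
  Function.Injective (κ ∘ Sum.inl) ∧ (∀ t, κ (.inl t) ≠ κ (.inr 0)) ∧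
    ∀ v : Fin k, κ (.inr v.castSucc) ≠ κ (.inr v.succ)

lemma csf_tail_ptClique_eq :
    csf ((ptClique (a + 1)).tail k).graph =
      csf (imageGraph (lollipopDisjSum a k) (lollipopMap a k)) :=
  csf_congr <| glueIsoImageGraph _ _ (lollipopMap a k) (Sum.map some Sum.inl)
    (by rintro (t | p) <;> rfl) (by rintro x y (⟨rfl, rfl⟩ | ⟨rfl, rfl⟩) <;> rfl) <| by
      rintro ((_ | t) | p | _)
      · exact .rel _ _ (Or.inl ⟨rfl, rfl⟩)
      · exact .refl _
      · exact .refl _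
      · exact .symm _ _ (.rel _ _ (Or.inr ⟨rfl, rfl⟩))

lemma lollipop_proper_iff (κ : Fin a ⊕ Fin (k + 1) → ℕ) :
    (∀ x y, (imageGraph (lollipopDisjSum a k) (lollipopMap a k)).Adj x y → κ x ≠ κ y) ↔
      IsLollipopColoring a k κ := by
  rw [imageGraph_proper_iff]
  constructor
  · intro h
    refine ⟨fun s t hst => by_contra fun hne => ?_, fun t => ?_, fun v => ?_⟩
    · exact h (.inl (some s)) (.inl (some t))
        (Or.inl ⟨_, _, (SimpleGraph.top_adj (V := Option (Fin a)) _ _).2 (by simpa using hne),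
          rfl, rfl⟩) (by simpa [lollipopMap] using hne) hst
    · exact h (.inl (some t)) (.inl none)
        (Or.inl ⟨_, _, (SimpleGraph.top_adj (V := Option (Fin a)) _ _).2 (by simp), rfl, rfl⟩)
        (by simp [lollipopMap])
    · refine h (.inr (.inl v.castSucc)) (.inr (.inl v.succ))
        (Or.inr ⟨_, _, Or.inl ⟨_, _, SimpleGraph.pathGraph_adj.2 (Or.inl (by simp)), rfl, rfl⟩,
          rfl, rfl⟩) (by simp [lollipopMap, Fin.ext_iff])
  · rintro ⟨hinj, hcross, hpath⟩ p q
      (⟨s, t, hst, rfl, rfl⟩ | ⟨_, _, ⟨u, w, huw, rfl, rfl⟩ | ⟨_, _, h, -⟩, rfl, rfl⟩) hne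
    · rcases s with _ | s <;> rcases t with _ | t
      · exact absurd rfl hst.ne
      · exact (hcross t).symm
      · exact hcross s
      · exact hinj.ne (by rintro rfl; exact hne rfl)
    · exact (pathGraph_proper_iff (κ ∘ Sum.inr)).2 hpath u w huw
    · exact h.elim

lemma card_injective_image_eq {S : Finset ℕ} (hS : #S = a) :
    Nat.card {f : Fin a → ℕ // Function.Injective f ∧ univ.image f = S} = a.factorial := by
  let e : {f : Fin a → ℕ // Function.Injective f ∧ univ.image f = S} ≃ (Fin a ≃ S) :=
    { toFun := fun f => Equiv.ofBijective
        (fun t => ⟨f.1 t, f.2.2.subset (mem_image_of_mem _ (mem_univ t))⟩)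
        ⟨fun s t h => f.2.1 (congrArg Subtype.val h), fun j => by
          obtain ⟨t, -, ht⟩ := mem_image.1 (f.2.2.symm.subset j.2)
          exact ⟨t, Subtype.ext ht⟩⟩
      invFun := fun e => ⟨fun t => e t, fun s t h => e.injective (Subtype.ext h), by
        ext j
        refine ⟨fun hj => ?_, fun hj => mem_image.2 ⟨e.symm ⟨j, hj⟩, mem_univ _, by simp⟩⟩
        obtain ⟨t, -, rfl⟩ := mem_image.1 hj
        exact (e t).2⟩
      left_inv := fun f => rfl
      right_inv := fun e => Equiv.ext fun t => rfl }
  rw [Nat.card_congr e, Nat.card_eq_fintype_card,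
    Fintype.card_equiv (Fintype.equivOfCardEq (by simp [hS])), Fintype.card_fin]

/-- Split a colouring into its restriction to the clique, an injection onto some `a`-set `S`, and
its restriction to the path, which starts with a colour `i ∉ S`. -/
lemma card_isLollipopColoring (d : ℕ →₀ ℕ) :
    Nat.card {κ // IsLollipopColoring a k κ ∧ profile κ = d} =
      a.factorial * ∑ S ∈ d.support.powersetCard a, ∑ i ∈ d.support \ S,
        pathCount k (d - indicatorFinsupp S) i := by
  have := finite_of_profile_eq (d := d) (P := fun κ => IsLollipopColoring a k κ ∧ profile κ = d)
    fun _ h => h.2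
  rw [Nat.card_eq_sum_card_fiber
    (fun κ => (⟨univ.image (κ ∘ Sum.inl), κ (.inr 0)⟩ : Σ _ : Finset ℕ, ℕ))
    ((d.support.powersetCard a).sigma fun S => d.support \ S) ?mem, sum_sigma, mul_sum]
  case mem =>
    rintro κ ⟨⟨hinj, hcross, -⟩, rfl⟩
    simp only [mem_sigma, mem_powersetCard, mem_sdiff, mem_image, mem_univ, true_and,
      card_image_of_injective _ hinj, card_univ, Fintype.card_fin, and_true, not_exists]
    exact ⟨fun j hj => by obtain ⟨t, -, rfl⟩ := mem_image.1 hj; exact mem_support_profile κ _,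
      mem_support_profile κ _, hcross⟩
  refine sum_congr rfl fun S hS => ?_
  rw [mem_powersetCard] at hS
  rw [mul_sum]
  refine sum_congr rfl fun i hi => ?_
  rw [← card_injective_image_eq a hS.2, pathCount, ← Nat.card_prod]
  refine Nat.card_congr ((Equiv.subtypeEquiv (Equiv.sumArrowEquivProdArrow _ _ _) fun κ => ?_).trans
    Equiv.subtypeProdEquivProd)
  have hle := indicatorFinsupp_le hS.1
  change _ ↔ (Function.Injective (κ ∘ Sum.inl) ∧ univ.image (κ ∘ Sum.inl) = S) ∧
    (κ ∘ Sum.inr) 0 = i ∧ (∀ v : Fin k, (κ ∘ Sum.inr) v.castSucc ≠ (κ ∘ Sum.inr) v.succ) ∧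
      profile (κ ∘ Sum.inr) = d - indicatorFinsupp S
  simp only [Sigma.mk.injEq, heq_eq_eq, profile_sum κ]
  constructor
  · rintro ⟨⟨⟨hinj, -, hpath⟩, hd⟩, rfl, rfl⟩
    refine ⟨⟨hinj, rfl⟩, rfl, hpath, ?_⟩
    rw [eq_tsub_iff_add_eq_of_le hle, ← hd, profile_of_injective hinj, add_comm]
  · rintro ⟨⟨hinj, rfl⟩, rfl, hpath, hd⟩
    refine ⟨⟨⟨hinj, fun t ht => (mem_sdiff.1 hi).2 (mem_image.2 ⟨t, mem_univ t, ht⟩), hpath⟩,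
      ?_⟩, rfl, rfl⟩
    rw [profile_of_injective hinj, hd, add_tsub_cancel_of_le hle]

end Lollipop

lemma sum_powersetCard_sum_sdiff_insert {α M : Type*} [DecidableEq α] [AddCommMonoid M]
    (s : Finset α) (b : ℕ) (F : Finset α → α → M) :
    ∑ T ∈ s.powersetCard b, ∑ i ∈ s \ T, F (insert i T) i =
      ∑ U ∈ s.powersetCard (b + 1), ∑ i ∈ U, F U i := by
  rw [sum_sigma', sum_sigma']
  refine sum_nbij' (fun p => ⟨insert p.2 p.1, p.2⟩) (fun p => ⟨p.1.erase p.2, p.2⟩)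
    ?_ ?_ ?_ ?_ fun _ _ => rfl
  · rintro ⟨T, i⟩ hp
    simp only [mem_sigma, mem_powersetCard, mem_sdiff] at hp ⊢
    exact ⟨⟨insert_subset hp.2.1 hp.1.1, by rw [card_insert_of_notMem hp.2.2, hp.1.2]⟩,
      mem_insert_self _ _⟩
  · rintro ⟨U, i⟩ hp
    simp only [mem_sigma, mem_powersetCard, mem_sdiff] at hp ⊢
    exact ⟨⟨(erase_subset _ _).trans hp.1.1, by rw [card_erase_of_mem hp.2, hp.1.2]; rfl⟩,
      hp.1.1 hp.2, notMem_erase _ _⟩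
  · rintro ⟨T, i⟩ hp
    simp only [mem_sigma, mem_sdiff] at hp
    simp [erase_insert hp.2.2]
  · rintro ⟨U, i⟩ hp
    simp only [mem_sigma] at hp
    simp [insert_erase hp.2]

lemma sum_sum_erase_add_sum {α M : Type*} [DecidableEq α] [AddCommGroup M] {s U : Finset α}
    (hU : U ⊆ s) (f : α → M) :
    ∑ i ∈ U, ∑ j ∈ s.erase i, f j + ∑ j ∈ s, f j = #U • ∑ j ∈ s, f j + ∑ j ∈ s \ U, f j := by
  rw [sum_congr rfl fun i hi => sum_erase_eq_sub (hU hi), sum_sub_distrib, sum_const,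
    sum_sdiff_eq_sub hU]
  abel

/-- `R(a, k)`, coefficientwise `X_{K_{a+1}^k} / a!`. -/
def lollipopSeries (a k : ℕ) : MvPowerSeries ℕ ℚ := fun d =>
  ∑ S ∈ d.support.powersetCard a, ∑ i ∈ d.support \ S, (pathCount k (d - indicatorFinsupp S) i : ℚ)

lemma csf_tail_ptClique (a k : ℕ) :
    csf ((ptClique (a + 1)).tail k).graph = (a.factorial : ℚ) • lollipopSeries a k := by
  funext d
  rw [csf_tail_ptClique_eq, csf_apply, Nat.card_congr (Equiv.subtypeEquivRight fun κ =>
    and_congr_left' (lollipop_proper_iff a k κ)), card_isLollipopColoring]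
  push_cast
  rfl

lemma lollipopSeries_apply (a k : ℕ) (d : ℕ →₀ ℕ) :
    lollipopSeries a k d = ∑ U ∈ d.support.powersetCard (a + 1), ∑ i ∈ U,
      (pathCount k (d - indicatorFinsupp U + Finsupp.single i 1) i : ℚ) := by
  simp only [lollipopSeries]
  rw [← sum_powersetCard_sum_sdiff_insert]
  refine sum_congr rfl fun S hS => sum_congr rfl fun i hi => ?_
  rw [sub_indicatorFinsupp_eq_sub_insert_add (mem_powersetCard.1 hS).1 hi]

lemma lollipopSeries_zero_left (k : ℕ) :
    lollipopSeries 0 k = csf (SimpleGraph.pathGraph (k + 1)) := by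
  funext d
  simp only [lollipopSeries, powersetCard_zero, sum_singleton, sdiff_empty, indicatorFinsupp,
    sum_empty, tsub_zero]
  rw [csf_pathGraph_succ k subset_rfl]

lemma lollipopSeries_zero_right (a : ℕ) :
    lollipopSeries a 0 = ((a + 1 : ℕ) : ℚ) • esymm (a + 1) := by
  ext d
  rw [MvPowerSeries.coeff_smul, MvPowerSeries.coeff_apply, MvPowerSeries.coeff_apply,
    lollipopSeries_apply, ← mul_one (esymm (a + 1)), esymm_mul_apply, mul_sum]
  refine sum_congr rfl fun U hU => ?_
  change _ = _ * MvPowerSeries.coeff (d - indicatorFinsupp U) 1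
  simp [MvPowerSeries.coeff_one, pathCount_zero_add_single, (mem_powersetCard.1 hU).2]

lemma lollipopSeries_succ (a k : ℕ) :
    lollipopSeries a (k + 1) = (a : ℚ) • (esymm (a + 1) * csf (SimpleGraph.pathGraph (k + 1))) +
      lollipopSeries (a + 1) k := by
  ext d
  have hsupp : ∀ U : Finset ℕ, (d - indicatorFinsupp U).support ⊆ d.support :=
    fun U => Finsupp.support_tsub
  rw [map_add, MvPowerSeries.coeff_smul, MvPowerSeries.coeff_apply, MvPowerSeries.coeff_apply,
    MvPowerSeries.coeff_apply, lollipopSeries_apply, esymm_mul_apply, mul_sum]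
  simp only [lollipopSeries, pathCount_succ_add_single k (hsupp _), Nat.cast_sum,
    csf_pathGraph_succ k (hsupp _), ← sum_add_distrib]
  refine sum_congr rfl fun U hU => ?_
  have := sum_sum_erase_add_sum (mem_powersetCard.1 hU).1
    fun j => (pathCount k (d - indicatorFinsupp U) j : ℚ)
  rw [(mem_powersetCard.1 hU).2, nsmul_eq_mul] at this
  push_cast at this
  linear_combination this

lemma sum_smul_esymm_mul_csf_pathGraph {n a : ℕ} (ha : a + 1 ≤ n) :
    ∑ l ∈ range (a + 1), (1 - (l : ℚ)) • (esymm l * csf (SimpleGraph.pathGraph (n - l))) =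
      lollipopSeries a (n - 1 - a) := by
  induction a with
  | zero =>
    rw [sum_range_one, Nat.cast_zero, sub_zero, one_smul, esymm_zero, one_mul, Nat.sub_zero,
      Nat.sub_zero, lollipopSeries_zero_left, Nat.sub_add_cancel ha]
  | succ a ih =>
    obtain ⟨k, rfl⟩ : ∃ k, n = a + 2 + k := ⟨n - (a + 2), by omega⟩
    rw [sum_range_succ, ih (by omega), show a + 2 + k - 1 - a = k + 1 by omega,
      lollipopSeries_succ, show a + 2 + k - (a + 1) = k + 1 by omega,
      show a + 2 + k - 1 - (a + 1) = k by omega]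
    push_cast
    module

theorem statement10_general (n a : ℕ) (hn : 1 ≤ n) :
    (a ≤ n - 1 →
      ∑ l ∈ Finset.range (a + 1),
          (1 - (l : ℚ)) • (esymm l * csf (SimpleGraph.pathGraph (n - l))) =
        (Nat.factorial a : ℚ)⁻¹ • csf ((ptClique (a + 1)).tail (n - 1 - a)).graph) ∧
    (a = n →
      ∑ l ∈ Finset.range (a + 1),
          (1 - (l : ℚ)) • (esymm l * csf (SimpleGraph.pathGraph (n - l))) =
        esymm n) := by
  refine ⟨fun ha => ?_, ?_⟩
  · rw [sum_smul_esymm_mul_csf_pathGraph (by omega), csf_tail_ptClique, smul_smul,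
      inv_mul_cancel₀ (by positivity), one_smul]
  · rintro rfl
    obtain ⟨m, rfl⟩ : ∃ m, a = m + 1 := ⟨a - 1, by omega⟩
    rw [sum_range_succ, sum_smul_esymm_mul_csf_pathGraph le_rfl, Nat.sub_self,
      show m + 1 - 1 - m = 0 by omega, lollipopSeries_zero_right, csf_pathGraph_zero, mul_one]
    push_cast
    module

/-- for `n ≥ 1` and `0 ≤ a ≤ n`,
`∑_{l=0}^{a} (1-l) e_l X_{P_{n-l}}` equals `X_{K_{a+1}^{n-1-a}} / a!` when
`a ≤ n-1`, and equals `e_n` when `a = n`. -/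
theorem statement10 (n a : ℕ) (hn : 1 ≤ n) (han : a ≤ n) :
    (a ≤ n - 1 →
      ∑ l ∈ Finset.range (a + 1),
          (1 - (l : ℚ)) • (esymm l * csf (SimpleGraph.pathGraph (n - l))) =
        (Nat.factorial a : ℚ)⁻¹ • csf ((ptClique (a + 1)).tail (n - 1 - a)).graph) ∧
    (a = n →
      ∑ l ∈ Finset.range (a + 1),
          (1 - (l : ℚ)) • (esymm l * csf (SimpleGraph.pathGraph (n - l))) =
        esymm n) :=
  statement10_general n a hn

end
end
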